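/- Let x₁,…,xₙ ∈ ℝᵈ satisfy the ℓ₂² triangle inequalities. Let Q be a positive definite d×d matrix such that (xᵢ−xⱼ)ᵀQ(xᵢ−xⱼ) ≤ 1 for all i,j. Then the map f(xᵢ) = (1/√d) Q^{-1/2} xᵢ satisfies ‖f(xᵢ)−f(xⱼ)‖ ≥ (1/√d)‖xᵢ−xⱼ‖² for all i,j. -/

import Mathlib

open Matrix

noncomputable def Matrix.PosSemidef.sqrt {n : Type*} [Fintype n] [DecidableEq n]
    {A : Matrix n n ℝ} (hA : A.PosSemidef) : Matrix n n ℝ :=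
  hA.1.eigenvectorUnitary.1 * diagonal (Real.sqrt ∘ hA.1.eigenvalues) *
    (star hA.1.eigenvectorUnitary : Matrix n n ℝ)

section DotProduct

variable {ι : Type*} [Fintype ι]

lemma dotProduct_le_sqrt_mul_sqrt (u v : ι → ℝ) : u ⬝ᵥ v ≤ √(u ⬝ᵥ u) * √(v ⬝ᵥ v) := by
  simpa only [dotProduct, sq] using Real.sum_mul_le_sqrt_mul_sqrt Finset.univ u v

lemma sqrt_dotProduct_self_smul {c : ℝ} (hc : 0 ≤ c) (v : ι → ℝ) :
    √((c • v) ⬝ᵥ (c • v)) = c * √(v ⬝ᵥ v) := by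
  rw [smul_dotProduct, dotProduct_smul, smul_eq_mul, smul_eq_mul, ← mul_assoc,
    Real.sqrt_mul (mul_self_nonneg c), Real.sqrt_mul_self hc]

variable [DecidableEq ι]

lemma nonsing_inv_mulVec_dotProduct_transpose_mulVec {S : Matrix ι ι ℝ} (hS : IsUnit S.det)
    (y : ι → ℝ) : (S⁻¹ *ᵥ y) ⬝ᵥ (Sᵀ *ᵥ y) = y ⬝ᵥ y := by
  rw [dotProduct_comm, dotProduct_mulVec, mulVec_transpose, vecMul_vecMul,
    mul_nonsing_inv S hS, vecMul_one]

end DotProduct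

namespace Matrix.PosSemidef

variable {n : Type*} [Fintype n] [DecidableEq n] {A : Matrix n n ℝ} (hA : A.PosSemidef)
include hA

lemma transpose_sqrt : hA.sqrtᵀ = hA.sqrt := by
  simp [sqrt, mul_assoc, ← conjTranspose_eq_transpose_of_trivial, star_eq_conjTranspose]

lemma sqrt_mul_sqrt : hA.sqrt * hA.sqrt = A := by
  have hD : diagonal (Real.sqrt ∘ hA.1.eigenvalues) * diagonal (Real.sqrt ∘ hA.1.eigenvalues)
      = diagonal (RCLike.ofReal ∘ hA.1.eigenvalues) := by
    rw [diagonal_mul_diagonal]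
    congr 1; funext i
    exact Real.mul_self_sqrt (hA.eigenvalues_nonneg i)
  conv_rhs => rw [hA.1.spectral_theorem, Unitary.conjStarAlgAut_apply, ← hD]
  simp only [sqrt, mul_assoc]
  rw [← mul_assoc (star _), Unitary.star_mul_self_of_mem (SetLike.coe_mem _), one_mul]

lemma sqrt_mulVec_dotProduct_sqrt_mulVec (y : n → ℝ) :
    (hA.sqrt *ᵥ y) ⬝ᵥ (hA.sqrt *ᵥ y) = y ⬝ᵥ A *ᵥ y := by
  rw [dotProduct_mulVec, ← vecMul_transpose, hA.transpose_sqrt, vecMul_vecMul,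
    hA.sqrt_mul_sqrt, dotProduct_mulVec]

end Matrix.PosSemidef

lemma Matrix.PosDef.isUnit_det_sqrt {n : Type*} [Fintype n] [DecidableEq n]
    {A : Matrix n n ℝ} (hA : A.PosDef) : IsUnit hA.posSemidef.sqrt.det := by
  refine isUnit_iff_ne_zero.mpr fun h => hA.det_pos.ne' ?_
  rw [← hA.posSemidef.sqrt_mul_sqrt, det_mul, h, zero_mul]

/-- Cauchy–Schwarz for `A^{-1/2} y` and `A^{1/2} y`, whose inner product is `‖y‖²`. -/
lemma Matrix.PosDef.dotProduct_self_le_sqrt_mul_sqrt {n : Type*} [Fintype n] [DecidableEq n]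
    {A : Matrix n n ℝ} (hA : A.PosDef) (y : n → ℝ) :
    y ⬝ᵥ y ≤ √((hA.posSemidef.sqrt⁻¹ *ᵥ y) ⬝ᵥ (hA.posSemidef.sqrt⁻¹ *ᵥ y)) *
      √(y ⬝ᵥ A *ᵥ y) := by
  set S := hA.posSemidef.sqrt
  have hS : Sᵀ = S := hA.posSemidef.transpose_sqrt
  calc y ⬝ᵥ y = (S⁻¹ *ᵥ y) ⬝ᵥ (S *ᵥ y) := by
        nth_rw 2 [← hS]
        rw [nonsing_inv_mulVec_dotProduct_transpose_mulVec hA.isUnit_det_sqrt]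
    _ ≤ √((S⁻¹ *ᵥ y) ⬝ᵥ (S⁻¹ *ᵥ y)) * √((S *ᵥ y) ⬝ᵥ (S *ᵥ y)) :=
        dotProduct_le_sqrt_mul_sqrt _ _
    _ = √((S⁻¹ *ᵥ y) ⬝ᵥ (S⁻¹ *ᵥ y)) * √(y ⬝ᵥ A *ᵥ y) := by
        rw [hA.posSemidef.sqrt_mulVec_dotProduct_sqrt_mulVec]

theorem stmt7_general (n d : ℕ) (x : Fin n → Fin d → ℝ)
    (Q : Matrix (Fin d) (Fin d) ℝ) (hQ : Q.PosDef)
    (hencl : ∀ i j, (x i - x j) ⬝ᵥ Q.mulVec (x i - x j) ≤ 1)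
    (f : Fin n → Fin d → ℝ)
    (hf : ∀ i, f i = (1 / Real.sqrt d) • (hQ.posSemidef.sqrt⁻¹).mulVec (x i)) :
    ∀ i j, Real.sqrt ((f i - f j) ⬝ᵥ (f i - f j)) ≥
      (1 / Real.sqrt d) * ((x i - x j) ⬝ᵥ (x i - x j)) := by
  intro i j
  set S := hQ.posSemidef.sqrt
  set y := x i - x j
  have hfy : f i - f j = (1 / √d) • (S⁻¹ *ᵥ y) := by
    rw [hf, hf, ← smul_sub, ← mulVec_sub]
  have hQy : √(y ⬝ᵥ Q *ᵥ y) ≤ 1 := Real.sqrt_le_one.mpr (hencl i j)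
  rw [hfy, sqrt_dotProduct_self_smul (by positivity), ge_iff_le]
  gcongr
  calc y ⬝ᵥ y ≤ √((S⁻¹ *ᵥ y) ⬝ᵥ (S⁻¹ *ᵥ y)) * √(y ⬝ᵥ Q *ᵥ y) :=
        hQ.dotProduct_self_le_sqrt_mul_sqrt y
    _ ≤ √((S⁻¹ *ᵥ y) ⬝ᵥ (S⁻¹ *ᵥ y)) := mul_le_of_le_one_right (Real.sqrt_nonneg _) hQy

/-- If `(xᵢ−xⱼ)ᵀQ(xᵢ−xⱼ) ≤ 1` for all `i,j` (Q ≻ 0), then `f(xᵢ) = (1/√d)Q^{-1/2}xᵢ`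
satisfies `‖f(xᵢ)−f(xⱼ)‖ ≥ (1/√d)‖xᵢ−xⱼ‖²`. -/
theorem stmt7 (n d : ℕ) (x : Fin n → Fin d → ℝ)
    (htri : ∀ i j k, (x i - x j) ⬝ᵥ (x i - x j) + (x j - x k) ⬝ᵥ (x j - x k) ≥
      (x i - x k) ⬝ᵥ (x i - x k))
    (Q : Matrix (Fin d) (Fin d) ℝ) (hQ : Q.PosDef)
    (hencl : ∀ i j, (x i - x j) ⬝ᵥ Q.mulVec (x i - x j) ≤ 1)
    (f : Fin n → Fin d → ℝ)
    (hf : ∀ i, f i = (1 / Real.sqrt d) • (hQ.posSemidef.sqrt⁻¹).mulVec (x i)) :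
    ∀ i j, Real.sqrt ((f i - f j) ⬝ᵥ (f i - f j)) ≥
      (1 / Real.sqrt d) * ((x i - x j) ⬝ᵥ (x i - x j)) :=
  stmt7_general n d x Q hQ hencl f hf
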